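/- Suppose (a₁,b₁,T₁) and (a₂,b₂,T₂) are 4-chained, and write G_j = G_{a_j,b_j,T_j} for j = 1,2. Then for every integer k ≥ 1 the interval [s_{8k−3}(b₂,T₂) + (π/6)·T₂·b₂^{8k−3}, s_{8k−2}(b₂,T₂) − (π/6)·T₂·b₂^{8k−3}] is nonempty, and for every χ in this interval one has G₁(χ) ≤ −(1/2)·a₂·T₂·b₂^{8k−3} and G₂(χ) ≤ −(1/2)·a₂·T₂·b₂^{8k−3}. -/

import Mathlib

open Real Filter Set

/-- Breakpoints `s_n(b,T) = T·π·(b^n − 1)/(b − 1)`. -/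
noncomputable def brk (b T : ℝ) (n : ℕ) : ℝ := T * Real.pi * (b ^ n - 1) / (b - 1)

/-- Index of the segment containing `x ≥ 0`: the unique `m` with `s_m ≤ x < s_{m+1}`
(for `b > 1`, `T > 0`). -/
noncomputable def seg (b T x : ℝ) : ℕ := sInf {n : ℕ | x < brk b T (n + 1)}

/-- The saturated Nussbaum function `N_{a,b,T}`: on `[s_{n−1}, s_n)` (with `m = n − 1`)
it equals `(−1)^m·a·cos((χ − s_m)/(b^m·T))`, extended evenly to `χ < 0`. -/
noncomputable def satN (a b T : ℝ) (χ : ℝ) : ℝ :=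
  (-1 : ℝ) ^ (seg b T |χ|) * a *
    Real.cos ((|χ| - brk b T (seg b T |χ|)) / (b ^ (seg b T |χ|) * T))

/-- The integrated function `G_{a,b,T}(χ) = ∫_0^χ N_{a,b,T}(τ) dτ`. -/
noncomputable def satG (a b T : ℝ) (χ : ℝ) : ℝ := ∫ τ in (0:ℝ)..χ, satN a b T τ

/-- Two triples `(a₁,b₁,T₁)`, `(a₂,b₂,T₂)` are 4-chained. -/
def Chained4 (a₁ b₁ T₁ a₂ b₂ T₂ : ℝ) : Prop :=
  0 < a₂ ∧ 1 < b₂ ∧ 0 < T₂ ∧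
    b₁ = b₂ ^ 4 ∧ a₁ = (b₂ ^ 3 / (1 + b₂ + b₂ ^ 2 + b₂ ^ 3)) * a₂ ∧
    T₁ = (1 + b₂ + b₂ ^ 2 + b₂ ^ 3) * T₂

/-!
On the segment `[s_m, s_{m+1}]` the primitive `G_{a,b,T}` equals
`(-1)^m·a·b^m·T·sin((χ - s_m)/(b^m·T))`, because `G` vanishes at every breakpoint. The
breakpoints of the 4-chained triple `(a₁,b₁,T₁)` are every fourth breakpoint of `(a₂,b₂,T₂)`, so
the odd segment `8k-3` of the second system lies inside the odd segment `2k-1` of the first.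
On the window the phase of the second system stays in `[π/6, 5π/6]`, which gives the bound for
`G₂`. Since `π > 3`, the phase of the first system stays at distance at least
`t = (6+b₂)/(2(1+b₂+b₂²+b₂³))` from `0` and `π`, and `b₂²·sin t ≥ 1/2` (from
`sin t ≥ t - t³/6`) exactly compensates the amplitude `a₁·b₁^{2k-1}·T₁ = a₂·T₂·b₂^{8k-1}`.
-/

lemma brk_zero (b T : ℝ) : brk b T 0 = 0 := by simp [brk]

lemma brk_add {b : ℝ} (hb : 1 < b) (T : ℝ) (m n : ℕ) :
    brk b T (m + n) = brk b T m + b ^ m * brk b T n := by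
  have : b - 1 ≠ 0 := by linarith
  simp only [brk]
  field_simp
  ring

lemma brk_one {b : ℝ} (hb : 1 < b) (T : ℝ) : brk b T 1 = π * T := by
  have : b - 1 ≠ 0 := by linarith
  simp only [brk]
  field_simp

lemma brk_succ {b : ℝ} (hb : 1 < b) (T : ℝ) (n : ℕ) :
    brk b T (n + 1) = brk b T n + π * T * b ^ n := by
  rw [brk_add hb, brk_one hb]
  ring

lemma brk_strictMono {b T : ℝ} (hb : 1 < b) (hT : 0 < T) : StrictMono (brk b T) :=
  strictMono_nat_of_lt_succ fun n => by
    rw [brk_succ hb]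
    linarith [show 0 < π * T * b ^ n by positivity]

lemma brk_nonneg {b T : ℝ} (hb : 1 < b) (hT : 0 < T) (n : ℕ) : 0 ≤ brk b T n :=
  brk_zero b T ▸ (brk_strictMono hb hT).monotone n.zero_le

lemma brk_pow_four {b : ℝ} (hb : 1 < b) (T : ℝ) (n : ℕ) :
    brk (b ^ 4) ((1 + b + b ^ 2 + b ^ 3) * T) n = brk b T (4 * n) := by
  have h1 : b - 1 ≠ 0 := by linarith
  have h4 : b ^ 4 - 1 ≠ 0 := sub_ne_zero.2 (one_lt_pow₀ hb four_ne_zero).ne'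
  simp only [brk, pow_mul]
  field_simp
  ring

lemma seg_eq_of_mem_Ico {b T x : ℝ} (hb : 1 < b) (hT : 0 < T) {m : ℕ}
    (hx : x ∈ Ico (brk b T m) (brk b T (m + 1))) : seg b T x = m :=
  le_antisymm (Nat.sInf_le hx.2) <| le_csInf ⟨m, hx.2⟩ fun n hn => by
    by_contra! hnm
    exact (hx.1.trans_lt hn).not_ge ((brk_strictMono hb hT).monotone hnm)

section Segment

variable {a b T : ℝ} (hb : 1 < b) (hT : 0 < T) (m : ℕ)
include hb hT

lemma brk_succ_sub_div : (brk b T (m + 1) - brk b T m) / (b ^ m * T) = π := by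
  rw [brk_succ hb]
  field_simp
  ring

lemma satN_eqOn_Icc :
    EqOn (satN a b T) (fun x => (-1) ^ m * a * cos ((x - brk b T m) / (b ^ m * T)))
      (Icc (brk b T m) (brk b T (m + 1))) := by
  rintro x ⟨hmx, hxm⟩
  rw [satN, abs_of_nonneg ((brk_nonneg hb hT m).trans hmx)]
  rcases hxm.lt_or_eq with hxm | rfl
  · rw [seg_eq_of_mem_Ico hb hT ⟨hmx, hxm⟩]
  · have hseg := seg_eq_of_mem_Ico hb hT ⟨le_rfl, (brk_strictMono hb hT) (m + 1).lt_succ_self⟩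
    simp only [hseg, sub_self, zero_div, cos_zero, brk_succ_sub_div hb hT, cos_pi, pow_succ]
    ring

lemma continuousOn_satN_Icc : ContinuousOn (satN a b T) (Icc (brk b T m) (brk b T (m + 1))) :=
  ContinuousOn.congr (by fun_prop) (satN_eqOn_Icc hb hT m)

lemma integral_satN_of_mem_Icc {x : ℝ} (hx : x ∈ Icc (brk b T m) (brk b T (m + 1))) :
    ∫ τ in brk b T m..x, satN a b T τ
      = (-1) ^ m * a * (b ^ m * T) * sin ((x - brk b T m) / (b ^ m * T)) := by
  have hsub : uIcc (brk b T m) x ⊆ Icc (brk b T m) (brk b T (m + 1)) :=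
    ordConnected_Icc.uIcc_subset (left_mem_Icc.2 (brk_strictMono hb hT m.lt_succ_self).le) hx
  rw [intervalIntegral.integral_congr ((satN_eqOn_Icc hb hT m).mono hsub),
    intervalIntegral.integral_const_mul,
    intervalIntegral.integral_comp_sub_right (fun s => cos (s / (b ^ m * T))),
    intervalIntegral.integral_comp_div _ (by positivity), integral_cos]
  simp only [sub_self, zero_div, sin_zero, sub_zero, smul_eq_mul]
  ring

lemma satN_intervalIntegrable_zero_brk :
    IntervalIntegrable (satN a b T) MeasureTheory.volume 0 (brk b T m) := by
  induction m with
  | zero => rw [brk_zero]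
  | succ n ih =>
    refine ih.trans (ContinuousOn.intervalIntegrable ?_)
    rw [uIcc_of_le (brk_strictMono hb hT n.lt_succ_self).le]
    exact continuousOn_satN_Icc hb hT n

lemma satG_eq_add_integral_of_mem_Icc {x : ℝ} (hx : x ∈ Icc (brk b T m) (brk b T (m + 1))) :
    satG a b T x = satG a b T (brk b T m) + ∫ τ in brk b T m..x, satN a b T τ :=
  (intervalIntegral.integral_add_adjacent_intervals (satN_intervalIntegrable_zero_brk hb hT m)
    ((continuousOn_satN_Icc hb hT m).mono (uIcc_subset_Icc (left_mem_Icc.2 (hx.1.trans hx.2))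
      hx)).intervalIntegrable).symm

lemma satG_brk : satG a b T (brk b T m) = 0 := by
  induction m with
  | zero => rw [brk_zero, satG, intervalIntegral.integral_same]
  | succ n ih =>
    have hx : brk b T (n + 1) ∈ Icc (brk b T n) (brk b T (n + 1)) :=
      right_mem_Icc.2 (brk_strictMono hb hT n.lt_succ_self).le
    rw [satG_eq_add_integral_of_mem_Icc hb hT n hx, ih, integral_satN_of_mem_Icc hb hT n hx,
      brk_succ_sub_div hb hT, sin_pi]
    ring

lemma satG_eq_of_mem_Icc {x : ℝ} (hx : x ∈ Icc (brk b T m) (brk b T (m + 1))) :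
    satG a b T x = (-1) ^ m * a * (b ^ m * T) * sin ((x - brk b T m) / (b ^ m * T)) := by
  rw [satG_eq_add_integral_of_mem_Icc hb hT m hx, satG_brk hb hT m, zero_add,
    integral_satN_of_mem_Icc hb hT m hx]

end Segment

lemma sin_le_sin_of_le_of_le_pi_sub {t θ : ℝ} (ht : 0 ≤ t) (htθ : t ≤ θ) (hθt : θ ≤ π - t) :
    sin t ≤ sin θ := by
  have htπ : t ≤ π / 2 := by linarith
  rcases le_total θ (π / 2) with hθ | hθ
  · exact sin_le_sin_of_le_of_le_pi_div_two (by linarith [pi_pos]) hθ htθ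
  · rw [← sin_pi_sub θ]
    exact sin_le_sin_of_le_of_le_pi_div_two (by linarith [pi_pos]) (by linarith) (by linarith)

lemma satG_le_neg_mul_sin_of_odd {a b T t x : ℝ} (ha : 0 ≤ a) (hb : 1 < b) (hT : 0 < T)
    {m : ℕ} (hm : Odd m) (ht : 0 ≤ t) (htx : brk b T m + t * (b ^ m * T) ≤ x)
    (hxt : x ≤ brk b T (m + 1) - t * (b ^ m * T)) :
    satG a b T x ≤ -(a * (b ^ m * T) * sin t) := by
  have hbT : 0 < b ^ m * T := by positivity
  have hw : 0 ≤ t * (b ^ m * T) := by positivity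
  have hx : x ∈ Icc (brk b T m) (brk b T (m + 1)) := ⟨by linarith, by linarith⟩
  rw [satG_eq_of_mem_Icc hb hT m hx, hm.neg_one_pow]
  have hθ : t ≤ (x - brk b T m) / (b ^ m * T) := by
    rw [le_div_iff₀ hbT]
    linarith
  have hθ' : (x - brk b T m) / (b ^ m * T) ≤ π - t := by
    rw [div_le_iff₀ hbT]
    linarith [brk_succ hb T m]
  have := mul_le_mul_of_nonneg_left (sin_le_sin_of_le_of_le_pi_sub ht hθ hθ')
    (mul_nonneg ha hbT.le)
  linarith

lemma satG_le_neg_half_of_odd {a b T x : ℝ} (ha : 0 ≤ a) (hb : 1 < b) (hT : 0 < T)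
    {n : ℕ} (hn : Odd n) (hx : x ∈ Icc (brk b T n + π / 6 * T * b ^ n)
      (brk b T (n + 1) - π / 6 * T * b ^ n)) :
    satG a b T x ≤ -(1 / 2) * (a * T * b ^ n) := by
  have := satG_le_neg_mul_sin_of_odd ha hb hT hn (by positivity) (t := π / 6) (x := x)
    (by linarith [hx.1]) (by linarith [hx.2])
  rw [sin_pi_div_six] at this
  linarith

lemma one_half_le_sq_mul_sin {b : ℝ} (hb : 1 ≤ b) :
    1 / 2 ≤ b ^ 2 * sin ((6 + b) / (2 * (1 + b + b ^ 2 + b ^ 3))) := by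
  set S := 1 + b + b ^ 2 + b ^ 3 with hS
  set t := (6 + b) / (2 * S)
  have hS4 : 4 ≤ S := by nlinarith
  have hpoly : 0 ≤ 24 * S ^ 2 * (5 * b ^ 2 - b - 1) - b ^ 2 * (6 + b) ^ 3 := by
    have h1 : 72 * S ^ 2 * b ^ 2 ≤ 24 * S ^ 2 * (5 * b ^ 2 - b - 1) := by
      nlinarith [mul_nonneg (sq_nonneg S) (by nlinarith : (0 : ℝ) ≤ (2 * b + 1) * (b - 1))]
    have h2 : (6 + b) ^ 3 ≤ 72 * S ^ 2 := by nlinarith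
    linarith [mul_le_mul_of_nonneg_left h2 (sq_nonneg b)]
  have hcube : b ^ 2 * (t - t ^ 3 / 6) - 1 / 2
      = (24 * S ^ 2 * (5 * b ^ 2 - b - 1) - b ^ 2 * (6 + b) ^ 3) / (48 * S ^ 3) := by
    simp only [t, hS]
    field_simp
    ring
  have : 0 ≤ b ^ 2 * (t - t ^ 3 / 6) - 1 / 2 := hcube ▸ div_nonneg hpoly (by positivity)
  linarith [mul_le_mul_of_nonneg_left (sin_ge_sub_cube (by positivity : 0 ≤ t)) (sq_nonneg b)]

lemma chained_segment_margin {b T S χ : ℝ} (hb : 1 < b) (hT : 0 < T)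
    (hS : S = 1 + b + b ^ 2 + b ^ 3) {j : ℕ}
    (hχ : χ ∈ Icc (brk b T (4 * j + 1) + π / 6 * T * b ^ (4 * j + 1))
      (brk b T (4 * j + 2) - π / 6 * T * b ^ (4 * j + 1))) :
    brk (b ^ 4) (S * T) j + (6 + b) / (2 * S) * ((b ^ 4) ^ j * (S * T)) ≤ χ ∧
      χ ≤ brk (b ^ 4) (S * T) (j + 1) - (6 + b) / (2 * S) * ((b ^ 4) ^ j * (S * T)) := by
  subst hS
  have hb1 : b - 1 ≠ 0 := by linarith
  have hc : 0 < T * b ^ (4 * j) := by positivity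
  have hwidth : (6 + b) / (2 * (1 + b + b ^ 2 + b ^ 3)) *
      ((b ^ 4) ^ j * ((1 + b + b ^ 2 + b ^ 3) * T)) = (6 + b) / 2 * (T * b ^ (4 * j)) := by
    rw [← pow_mul]
    field_simp
  have hbrk2 : brk b T 2 = π * T * (1 + b) := by
    simp only [brk]
    field_simp
    ring
  have hbrk4 : brk b T 4 = π * T * (1 + b + b ^ 2 + b ^ 3) := by
    simp only [brk]
    field_simp
    ring
  obtain ⟨hχl, hχr⟩ := hχ
  rw [brk_add hb, brk_one hb, pow_succ] at hχl
  rw [brk_add hb, hbrk2, pow_succ] at hχr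
  rw [brk_pow_four hb, brk_pow_four hb, hwidth, mul_add, mul_one, brk_add hb, hbrk4]
  have hl : 0 ≤ (π - 3) * (6 + b) * (T * b ^ (4 * j)) :=
    mul_nonneg (mul_nonneg (by linarith [pi_gt_three]) (by linarith)) hc.le
  have hr : 0 ≤ (π * (b ^ 2 + b ^ 3 + b / 6) - (6 + b) / 2) * (T * b ^ (4 * j)) := by
    refine mul_nonneg ?_ hc.le
    have : 1 ≤ b ^ 2 + b ^ 3 := by nlinarith
    nlinarith [pi_gt_three]
  constructor <;> linarith

lemma satG_chained_le_neg_half {a b T S χ : ℝ} (ha : 0 ≤ a) (hb : 1 < b) (hT : 0 < T)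
    (hS : S = 1 + b + b ^ 2 + b ^ 3) {j : ℕ} (hj : Odd j)
    (hχ : χ ∈ Icc (brk b T (4 * j + 1) + π / 6 * T * b ^ (4 * j + 1))
      (brk b T (4 * j + 2) - π / 6 * T * b ^ (4 * j + 1))) :
    satG (b ^ 3 / S * a) (b ^ 4) (S * T) χ ≤ -(1 / 2) * (a * T * b ^ (4 * j + 1)) := by
  have hS0 : 0 < S := hS ▸ by positivity
  obtain ⟨hl, hr⟩ := chained_segment_margin hb hT hS hχ
  have hG := satG_le_neg_mul_sin_of_odd (a := b ^ 3 / S * a) (by positivity)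
    (one_lt_pow₀ hb four_ne_zero) (by positivity) hj (by positivity) hl hr
  have hamp : b ^ 3 / S * a * ((b ^ 4) ^ j * (S * T)) = a * T * b ^ (4 * j + 1) * b ^ 2 := by
    rw [← pow_mul]
    field_simp
    ring
  have hsin := mul_le_mul_of_nonneg_left (hS ▸ one_half_le_sq_mul_sin hb.le)
    (by positivity : 0 ≤ a * T * b ^ (4 * j + 1))
  rw [hamp] at hG
  linarith

/-- on a common interval inside the `(8k−2)`-th fast segment, both
`G₁` and `G₂` are below `−(1/2)·a₂·T₂·b₂^{8k−3}`. -/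
theorem chained_common_negative_interval (a₁ b₁ T₁ a₂ b₂ T₂ : ℝ)
    (h : Chained4 a₁ b₁ T₁ a₂ b₂ T₂) (k : ℕ) (hk : 1 ≤ k) :
    brk b₂ T₂ (8 * k - 3) + (Real.pi / 6) * T₂ * b₂ ^ (8 * k - 3) ≤
      brk b₂ T₂ (8 * k - 2) - (Real.pi / 6) * T₂ * b₂ ^ (8 * k - 3) ∧
    ∀ χ ∈ Set.Icc (brk b₂ T₂ (8 * k - 3) + (Real.pi / 6) * T₂ * b₂ ^ (8 * k - 3))
        (brk b₂ T₂ (8 * k - 2) - (Real.pi / 6) * T₂ * b₂ ^ (8 * k - 3)),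
      satG a₁ b₁ T₁ χ ≤ -(1 / 2) * (a₂ * T₂ * b₂ ^ (8 * k - 3)) ∧
      satG a₂ b₂ T₂ χ ≤ -(1 / 2) * (a₂ * T₂ * b₂ ^ (8 * k - 3)) := by
  obtain ⟨ha, hb, hT, rfl, rfl, rfl⟩ := h
  obtain ⟨j, hj, h3, h2⟩ : ∃ j, Odd j ∧ 8 * k - 3 = 4 * j + 1 ∧ 8 * k - 2 = 4 * j + 2 :=
    ⟨2 * k - 1, ⟨k - 1, by omega⟩, by omega, by omega⟩
  rw [h3, h2]
  refine ⟨?_, fun χ hχ => ⟨satG_chained_le_neg_half ha.le hb hT rfl hj hχ,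
    satG_le_neg_half_of_odd ha.le hb hT ⟨2 * j, by ring⟩ hχ⟩⟩
  rw [brk_succ hb T₂ (4 * j + 1)]
  linarith [show 0 ≤ π * T₂ * b₂ ^ (4 * j + 1) by positivity]
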